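/- Let ⟨P_α⟩_{α<λ} be a ⊑-increasing sequence of special perfect-tree forcing notions (P_α ⊑ P_β whenever α < β < λ). Then P = ⋃_{α<λ} P_α is a regular perfect-tree forcing notion, and for each γ < λ the set P_γ is pre-dense in P. -/

import Mathlib

noncomputable section

/-- Finite binary strings. -/
abbrev Str : Type := List Bool

/-- Points of Cantor space `2^ω`. -/
abbrev Pt : Type := ℕ → Bool

/-- The length-`n` initial segment of a point of Cantor space, as a string. -/
def seg (a : Pt) (n : ℕ) : Str := (List.range n).map a

/-- A tree: a set of strings closed under initial segments. -/
def IsTree (T : Set Str) : Prop := ∀ ⦃s t : Str⦄, s <+: t → t ∈ T → s ∈ T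

/-- A perfect tree: a nonempty tree in which every string has two
incomparable extensions inside the tree. -/
def IsPerfectTree (T : Set Str) : Prop :=
  T.Nonempty ∧ IsTree T ∧
    ∀ s ∈ T, ∃ t₁ t₂, t₁ ∈ T ∧ t₂ ∈ T ∧ s <+: t₁ ∧ s <+: t₂ ∧ ¬ t₁ <+: t₂ ∧ ¬ t₂ <+: t₁

/-- The restriction `T↾s = {t ∈ T : s ⊆ t or t ⊆ s}`. -/
def Tres (T : Set Str) (s : Str) : Set Str := {t ∈ T | s <+: t ∨ t <+: s}

/-- The set `[T]` of branches of a tree `T`. -/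
def branches (T : Set Str) : Set Pt := {a | ∀ n, seg a n ∈ T}

/-- `s` is the stem (root) of `T`: the longest `s ∈ T` with `T = T↾s`. -/
def IsStem (T : Set Str) (s : Str) : Prop :=
  s ∈ T ∧ T = Tres T s ∧ ∀ t ∈ T, T = Tres T t → t <+: s

open Classical in
/-- The stem `root(T)` of a tree (junk value `[]` if there is none). -/
def stem (T : Set Str) : Str := if h : ∃ s, IsStem T s then h.choose else []

/-- Simple splitting `T→i = T↾(root(T)⌢i)`. -/
def splitOne (T : Set Str) (i : Bool) : Set Str := Tres T (stem T ++ [i])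

/-- Iterated splitting `T→u`. -/
def splitIter (T : Set Str) (u : Str) : Set Str := u.foldl splitOne T

/-- Almost disjointness of trees: finite intersection. -/
def AD (S T : Set Str) : Prop := (S ∩ T).Finite

/-- A perfect-tree forcing notion: a nonempty set of perfect trees closed
under restrictions. -/
def IsPTF (P : Set (Set Str)) : Prop :=
  P.Nonempty ∧ (∀ T ∈ P, IsPerfectTree T) ∧ ∀ T ∈ P, ∀ s ∈ T, Tres T s ∈ P

/-- `A` is relatively clopen in `B` (as a subspace of Cantor space). -/
def ClopenIn (A B : Set Pt) : Prop := IsClopen ((fun x : B => (x : Pt)) ⁻¹' A)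

/-- `A` is relatively open in `B` (as a subspace of Cantor space). -/
def OpenIn (A B : Set Pt) : Prop := IsOpen ((fun x : B => (x : Pt)) ⁻¹' A)

/-- A special perfect-tree forcing notion: `P = {T↾s : s ∈ T ∈ A}` for an
antichain (pairwise a.d. set) `A ⊆ P`. -/
def SpecialPTF (P : Set (Set Str)) : Prop :=
  ∃ A ⊆ P, A.Pairwise AD ∧ P = {R | ∃ T ∈ A, ∃ s ∈ T, R = Tres T s}

/-- A regular perfect-tree forcing notion: `[S] ∩ [T]` is relatively clopen
in `[S]` or in `[T]`, for all `S, T ∈ P`. -/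
def RegularPTF (P : Set (Set Str)) : Prop :=
  ∀ S ∈ P, ∀ T ∈ P,
    ClopenIn (branches S ∩ branches T) (branches S) ∨
    ClopenIn (branches S ∩ branches T) (branches T)

/-- `T ⊆ᶠ ⋃ D`: `[T]` is covered by finitely many `[S]`, `S ∈ D`. -/
def SqFin (T : Set Str) (D : Set (Set Str)) : Prop :=
  ∃ D' ⊆ D, D'.Finite ∧ branches T ⊆ ⋃ S ∈ D', branches S

/-- `P ⊑ Q`: `Q` is a refinement of `P`. -/
def Refines (P Q : Set (Set Str)) : Prop :=
  (∀ T ∈ P, ∃ S ∈ Q, S ⊆ T) ∧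
  (∀ S ∈ Q, SqFin S P) ∧
  (∀ S ∈ Q, ∀ T ∈ P, ClopenIn (branches S ∩ branches T) (branches S) ∧ ¬ T ⊆ S)

/-- `D` is dense in `P`. -/
def DenseIn (D P : Set (Set Str)) : Prop := ∀ T ∈ P, ∃ S ∈ D, S ⊆ T

/-- `D` is pre-dense in `P`. -/
def PreDenseIn (D P : Set (Set Str)) : Prop :=
  DenseIn {T ∈ P | ∃ S ∈ D, T ⊆ S} P

/-- `P ⊑_D Q`: `Q` locks `D` over `P`. -/
def Locks (P D Q : Set (Set Str)) : Prop :=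
  Refines P Q ∧ ∀ S ∈ Q, SqFin S D

/-- A finite splitting system of height `n` over `P`. -/
def IsFSS (P : Set (Set Str)) (n : ℕ) (φ : Str → Set Str) : Prop :=
  (∀ s : Str, s.length ≤ n → φ s ∈ P) ∧
  ∀ (s : Str) (i : Bool), s.length < n → φ (s ++ [i]) ⊆ splitOne (φ s) i

/-!
Trees from two different levels `α < β` are handled by clause (iii) of `P_α ⊑ P_β`, which makes
`[S] ∩ [T]` relatively clopen in the branches of the later tree. Two trees of the same level are
restrictions `T₀↾s`, `T₁↾t` of members of an antichain: if `T₀ ≠ T₁` their branch sets are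
disjoint, and otherwise they are disjoint or nested according as `s`, `t` are incomparable or
comparable.

For pre-density of `P_γ` below `T ∈ P_α` with `γ < α`, a branch `x` of `T` lies in some `[S]` with
`S ∈ P_γ` by clause (ii), and `[T] ∩ [S]` is relatively open in `[T]` by clause (iii), so it
contains `[T↾(x↾n)]` for some `n`. A perfect tree is determined by its branches, so
`T↾(x↾n) ⊆ S`.
-/

section CantorSpace

lemma length_seg (a : Pt) (n : ℕ) : (seg a n).length = n := by simp [seg]

lemma seg_eq_seg_iff {a b : Pt} {n : ℕ} : seg b n = seg a n ↔ b ∈ PiNat.cylinder a n := by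
  simp [seg, List.map_inj_left]

lemma seg_prefix_seg (a : Pt) {n m : ℕ} (h : n ≤ m) : seg a n <+: seg a m := by
  obtain ⟨k, rfl⟩ := Nat.exists_eq_add_of_le h
  simp only [seg, List.range_add, List.map_append]
  exact List.prefix_append _ _

lemma prefix_or_prefix_of_seg_eq {a : Pt} {s t : Str} (hs : seg a s.length = s)
    (ht : seg a t.length = t) : s <+: t ∨ t <+: s := by
  rw [← hs, ← ht]
  rcases le_total s.length t.length with h | h
  · exact Or.inl (seg_prefix_seg a h)
  · exact Or.inr (seg_prefix_seg a h)

lemma exists_seg_eq (u : Str) : ∃ a : Pt, seg a u.length = u :=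
  ⟨fun k => u.getD k false, List.ext_getElem (length_seg _ _) fun i _ h => by simp [seg, h]⟩

lemma isClopen_setOf_seg_mem (R : Set Str) (n : ℕ) : IsClopen {a : Pt | seg a n ∈ R} := by
  have hseg : ∀ a : Pt, seg a n = List.ofFn fun i : Fin n => a i := fun a =>
    List.ext_getElem (by simp [seg]) fun i _ _ => by simp [seg]
  have hcont : Continuous fun (a : Pt) (i : Fin n) => a i := continuous_pi fun i => continuous_apply _
  simp_rw [hseg]
  exact (isClopen_discrete {f : Fin n → Bool | List.ofFn f ∈ R}).preimage hcont

lemma branches_eq_iInter (R : Set Str) : branches R = ⋂ n, {a : Pt | seg a n ∈ R} := by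
  ext; simp [branches]

lemma isClosed_branches (R : Set Str) : IsClosed (branches R) := by
  rw [branches_eq_iInter]
  exact isClosed_iInter fun n => (isClopen_setOf_seg_mem R n).isClosed

end CantorSpace

section Trees

lemma branches_mono {S T : Set Str} (h : S ⊆ T) : branches S ⊆ branches T :=
  fun _ ha n => h (ha n)

lemma IsTree.seg_mem {T : Set Str} (hT : IsTree T) {a : Pt} {n m : ℕ} (h : seg a m ∈ T)
    (hnm : n ≤ m) : seg a n ∈ T :=
  hT (seg_prefix_seg a hnm) h

lemma IsPerfectTree.exists_longer {T : Set Str} (hT : IsPerfectTree T) {t : Str} (ht : t ∈ T) :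
    ∃ u ∈ T, t.length < u.length := by
  obtain ⟨u₁, u₂, hu₁, hu₂, htu₁, htu₂, h₁₂, h₂₁⟩ := hT.2.2 t ht
  by_cases h : u₁.length ≤ t.length
  · refine ⟨u₂, hu₂, lt_of_not_ge fun h' => h₁₂ ?_⟩
    rw [(htu₁.eq_of_length_le h).symm]
    exact htu₂
  · exact ⟨u₁, hu₁, lt_of_not_ge h⟩

lemma IsPerfectTree.exists_length_ge {T : Set Str} (hT : IsPerfectTree T) (n : ℕ) :
    ∃ u ∈ T, n ≤ u.length := by
  induction n with
  | zero =>
    obtain ⟨u, hu⟩ := hT.1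
    exact ⟨u, hu, Nat.zero_le _⟩
  | succ n ih =>
    obtain ⟨u, hu, hn⟩ := ih
    obtain ⟨w, hw, huw⟩ := hT.exists_longer hu
    exact ⟨w, hw, by omega⟩

lemma IsPerfectTree.branches_nonempty {T : Set Str} (hT : IsPerfectTree T) :
    (branches T).Nonempty := by
  have hlevel : ∀ n, {a : Pt | seg a n ∈ T}.Nonempty := fun n => by
    obtain ⟨u, hu, hn⟩ := hT.exists_length_ge n
    obtain ⟨a, ha⟩ := exists_seg_eq u
    exact ⟨a, hT.2.1.seg_mem (m := u.length) (by rwa [ha]) hn⟩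
  rw [branches_eq_iInter]
  exact IsCompact.nonempty_iInter_of_sequence_nonempty_isCompact_isClosed _
    (fun n a ha => hT.2.1.seg_mem ha n.le_succ) hlevel
    (isClopen_setOf_seg_mem T 0).isClosed.isCompact fun n => (isClopen_setOf_seg_mem T n).isClosed

lemma tres_subset (T : Set Str) (s : Str) : Tres T s ⊆ T := fun _ h => h.1

lemma tres_anti (T : Set Str) {s t : Str} (h : s <+: t) : Tres T t ⊆ Tres T s := by
  rintro u ⟨hu, htu | hut⟩
  · exact ⟨hu, Or.inl (h.trans htu)⟩
  · exact ⟨hu, (List.prefix_or_prefix_of_prefix hut h).symm⟩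

lemma seg_eq_of_mem_branches_tres {T : Set Str} {s : Str} {a : Pt}
    (h : a ∈ branches (Tres T s)) : seg a s.length = s := by
  rcases (h s.length).2 with hs | hs
  · exact (hs.eq_of_length (length_seg a _).symm).symm
  · exact hs.eq_of_length (length_seg a _)

lemma IsPerfectTree.tres {T : Set Str} (hT : IsPerfectTree T) {s : Str} (hs : s ∈ T) :
    IsPerfectTree (Tres T s) := by
  obtain ⟨-, htree, hsplit⟩ := hT
  refine ⟨⟨s, hs, Or.inl (List.prefix_refl _)⟩, ?_, ?_⟩
  · rintro u t hut ⟨ht, hst | hts⟩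
    · exact ⟨htree hut ht, (List.prefix_or_prefix_of_prefix hut hst).symm⟩
    · exact ⟨htree hut ht, Or.inr (hut.trans hts)⟩
  · rintro u ⟨hu, hsu | hus⟩
    · obtain ⟨t₁, t₂, h₁, h₂, p₁, p₂, i₁, i₂⟩ := hsplit u hu
      exact ⟨t₁, t₂, ⟨h₁, Or.inl (hsu.trans p₁)⟩, ⟨h₂, Or.inl (hsu.trans p₂)⟩, p₁, p₂, i₁, i₂⟩
    · obtain ⟨t₁, t₂, h₁, h₂, p₁, p₂, i₁, i₂⟩ := hsplit s hs
      exact ⟨t₁, t₂, ⟨h₁, Or.inl p₁⟩, ⟨h₂, Or.inl p₂⟩, hus.trans p₁, hus.trans p₂, i₁, i₂⟩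

lemma IsPerfectTree.exists_mem_branches_seg_eq {T : Set Str} (hT : IsPerfectTree T) {t : Str}
    (ht : t ∈ T) : ∃ a ∈ branches T, seg a t.length = t := by
  obtain ⟨a, ha⟩ := (hT.tres ht).branches_nonempty
  exact ⟨a, branches_mono (tres_subset T t) ha, seg_eq_of_mem_branches_tres ha⟩

lemma IsPerfectTree.subset_of_branches_subset {T R : Set Str} (hT : IsPerfectTree T)
    (h : branches T ⊆ branches R) : T ⊆ R := fun t ht => by
  obtain ⟨a, ha, hat⟩ := hT.exists_mem_branches_seg_eq ht
  simpa [hat] using h ha t.length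

lemma AD.mono {S T S' T' : Set Str} (h : AD S T) (hS : S' ⊆ S) (hT : T' ⊆ T) : AD S' T' :=
  h.subset (Set.inter_subset_inter hS hT)

lemma branches_inter_eq_empty_of_AD {S T : Set Str} (h : AD S T) :
    branches S ∩ branches T = ∅ := by
  refine Set.eq_empty_of_forall_notMem fun a ⟨haS, haT⟩ => ?_
  refine Set.infinite_range_of_injective (f := seg a) (fun n m hnm => ?_) (h.subset ?_)
  · simpa [length_seg] using congrArg List.length hnm
  · rintro _ ⟨n, rfl⟩
    exact ⟨haS n, haT n⟩

end Trees

section Regularity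

lemma clopenIn_of_eq_empty {A B : Set Pt} (h : A = ∅) : ClopenIn A B := by
  simpa [ClopenIn, h] using isClopen_empty

lemma clopenIn_of_subset {A B : Set Pt} (h : B ⊆ A) : ClopenIn A B := by
  have : (fun x : B => (x : Pt)) ⁻¹' A = Set.univ := Set.eq_univ_of_forall fun x => h x.2
  simpa [ClopenIn, this] using isClopen_univ

lemma SpecialPTF.regularPTF {P : Set (Set Str)} (hP : SpecialPTF P) : RegularPTF P := by
  obtain ⟨A, -, hAD, rfl⟩ := hP
  rintro _ ⟨T₀, hT₀, s, -, rfl⟩ _ ⟨T₁, hT₁, t, -, rfl⟩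
  by_cases hempty : branches (Tres T₀ s) ∩ branches (Tres T₁ t) = ∅
  · exact Or.inl (clopenIn_of_eq_empty hempty)
  obtain ⟨a, ha₀, ha₁⟩ := Set.nonempty_iff_ne_empty.2 hempty
  obtain rfl : T₀ = T₁ := hAD.eq hT₀ hT₁ fun hAD₀₁ =>
    hempty (branches_inter_eq_empty_of_AD (hAD₀₁.mono (tres_subset T₀ s) (tres_subset T₁ t)))
  rcases prefix_or_prefix_of_seg_eq (seg_eq_of_mem_branches_tres ha₀)
    (seg_eq_of_mem_branches_tres ha₁) with hst | hts
  · exact Or.inr (clopenIn_of_subset fun b hb => ⟨branches_mono (tres_anti T₀ hst) hb, hb⟩)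
  · exact Or.inl (clopenIn_of_subset fun b hb => ⟨hb, branches_mono (tres_anti T₀ hts) hb⟩)

end Regularity

section Refinement

lemma ClopenIn.openIn {A B : Set Pt} (h : ClopenIn A B) : OpenIn A B := h.isOpen

lemma exists_tres_seg_subset {T S : Set Str} (hT : IsPerfectTree T)
    (hopen : OpenIn (branches T ∩ branches S) (branches T)) {x : Pt} (hxT : x ∈ branches T)
    (hxS : x ∈ branches S) : ∃ n, Tres T (seg x n) ⊆ S := by
  obtain ⟨U, hU, hUeq⟩ := isOpen_induced_iff.1 hopen
  have hxU : x ∈ U := by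
    have : (⟨x, hxT⟩ : branches T) ∈ Subtype.val ⁻¹' U := hUeq ▸ ⟨hxT, hxS⟩
    exact this
  obtain ⟨_, ⟨y, n, rfl⟩, hxc, hcU⟩ :=
    (PiNat.isTopologicalBasis_cylinders _).exists_subset_of_mem_open hxU hU
  rw [← PiNat.mem_cylinder_iff_eq.1 hxc] at hcU
  refine ⟨n, (hT.tres (hxT n)).subset_of_branches_subset fun b hb => ?_⟩
  have hbT : b ∈ branches T := branches_mono (tres_subset _ _) hb
  have hbU : b ∈ U := hcU <| seg_eq_seg_iff.1 <| by
    simpa [length_seg] using seg_eq_of_mem_branches_tres hb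
  have : (⟨b, hbT⟩ : branches T) ∈ Subtype.val ⁻¹' (branches T ∩ branches S) := hUeq ▸ hbU
  exact this.2

lemma Refines.exists_tres_subset {P Q : Set (Set Str)} (h : Refines P Q) {T : Set Str}
    (hTQ : T ∈ Q) (hT : IsPerfectTree T) : ∃ s ∈ T, ∃ S ∈ P, Tres T s ⊆ S := by
  obtain ⟨x, hxT⟩ := hT.branches_nonempty
  obtain ⟨D, hDP, -, hcover⟩ := h.2.1 T hTQ
  obtain ⟨S, hSD, hxS⟩ := Set.mem_iUnion₂.1 (hcover hxT)
  obtain ⟨n, hn⟩ := exists_tres_seg_subset hT (h.2.2 T hTQ S (hDP hSD)).1.openIn hxT hxS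
  exact ⟨seg x n, hxT n, S, hDP hSD, hn⟩

end Refinement

section Unions

variable {ι : Type*} {I : Set ι} {P : ι → Set (Set Str)}

lemma isPTF_biUnion (hI : I.Nonempty) (hP : ∀ i ∈ I, IsPTF (P i)) : IsPTF (⋃ i ∈ I, P i) := by
  obtain ⟨i, hi⟩ := hI
  obtain ⟨T, hT⟩ := (hP i hi).1
  refine ⟨⟨T, Set.mem_biUnion hi hT⟩, fun T hT => ?_, fun T hT s hs => ?_⟩
  · obtain ⟨i, hi, hTi⟩ := Set.mem_iUnion₂.1 hT
    exact (hP i hi).2.1 T hTi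
  · obtain ⟨i, hi, hTi⟩ := Set.mem_iUnion₂.1 hT
    exact Set.mem_biUnion hi ((hP i hi).2.2 T hTi s hs)

variable [LinearOrder ι]

lemma regularPTF_biUnion (hP : ∀ i ∈ I, RegularPTF (P i))
    (hinc : ∀ i ∈ I, ∀ j ∈ I, i < j → Refines (P i) (P j)) : RegularPTF (⋃ i ∈ I, P i) := by
  intro S hS T hT
  obtain ⟨i, hi, hSi⟩ := Set.mem_iUnion₂.1 hS
  obtain ⟨j, hj, hTj⟩ := Set.mem_iUnion₂.1 hT
  rcases lt_trichotomy i j with hij | rfl | hji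
  · exact Or.inr (Set.inter_comm _ _ ▸ ((hinc i hi j hj hij).2.2 T hTj S hSi).1)
  · exact hP i hi S hSi T hTj
  · exact Or.inl ((hinc j hj i hi hji).2.2 S hSi T hTj).1

lemma preDenseIn_biUnion (hP : ∀ i ∈ I, IsPTF (P i))
    (hinc : ∀ i ∈ I, ∀ j ∈ I, i < j → Refines (P i) (P j)) {k : ι} (hk : k ∈ I) :
    PreDenseIn (P k) (⋃ i ∈ I, P i) := by
  intro T hT
  obtain ⟨i, hi, hTi⟩ := Set.mem_iUnion₂.1 hT
  rcases lt_trichotomy i k with hik | rfl | hki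
  · obtain ⟨S, hSk, hST⟩ := (hinc i hi k hk hik).1 T hTi
    exact ⟨S, ⟨Set.mem_biUnion hk hSk, S, hSk, subset_rfl⟩, hST⟩
  · exact ⟨T, ⟨hT, T, hTi, subset_rfl⟩, subset_rfl⟩
  · obtain ⟨s, hs, S, hSk, hsS⟩ :=
      (hinc k hk i hi hki).exists_tres_subset hTi ((hP i hi).2.1 T hTi)
    exact ⟨Tres T s, ⟨Set.mem_biUnion hi ((hP i hi).2.2 T hTi s hs), S, hSk, hsS⟩,
      tres_subset T s⟩

end Unions

/-- Lemma 3.2 (pqr) (4),(5): the union of a `⊑`-increasing sequence of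
special perfect-tree forcing notions is a regular perfect-tree forcing
notion, and each term is pre-dense in the union. -/
theorem stmt14 (l : Ordinal) (hl : 0 < l) (P : Ordinal → Set (Set Str))
    (hptf : ∀ a < l, IsPTF (P a)) (hsp : ∀ a < l, SpecialPTF (P a))
    (hinc : ∀ a b : Ordinal, a < b → b < l → Refines (P a) (P b)) :
    IsPTF (⋃ a ∈ Set.Iio l, P a) ∧ RegularPTF (⋃ a ∈ Set.Iio l, P a) ∧
    ∀ g < l, PreDenseIn (P g) (⋃ a ∈ Set.Iio l, P a) := by
  have hinc' : ∀ a ∈ Set.Iio l, ∀ b ∈ Set.Iio l, a < b → Refines (P a) (P b) :=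
    fun a _ b hb hab => hinc a b hab hb
  exact ⟨isPTF_biUnion ⟨0, hl⟩ hptf,
    regularPTF_biUnion (fun a ha => (hsp a ha).regularPTF) hinc',
    fun g hg => preDenseIn_biUnion hptf hinc' hg⟩

end
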